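/- Let y ∈ {0,1}^ℤ, let x = L_0(y), and let Γ = [n, n+k] (an integer interval) be a string attractor of x. Then: (1) there exists m ∈ ℤ such that (L_0)_y^{-1}(Γ) = [m, m+ℓ], where ℓ = k minus the number of occurrences of the letter 1 in x_{[n+1, n+k]}; (2) the set [m−1, m+ℓ] is a string attractor of y; (3) if x_{n−1} x_n ≠ 00 then the position m−1 may be removed, and if x_{n+k} x_{n+k+1} = 01 then the position m+ℓ may be removed, and the resulting set is still a string attractor of y. -/

import Mathlib

open scoped ENat Classical

/-- The length-`n` factor of the bi-infinite word `x` starting at position `i`. -/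
def subwordZ {A : Type*} (x : ℤ → A) (i : ℤ) (n : ℕ) : List A :=
  (List.range n).map fun j => x (i + (j : ℤ))

/-- `w` occurs in `x` at position `i`. -/
def occursAt {A : Type*} (x : ℤ → A) (w : List A) (i : ℤ) : Prop :=
  subwordZ x i w.length = w

/-- `w` is a factor of the bi-infinite word `x`. -/
def IsFactorZ {A : Type*} (x : ℤ → A) (w : List A) : Prop :=
  ∃ i : ℤ, occursAt x w i

/-- `Γ` is a string attractor of the bi-infinite word `x`: every nonempty factor
has an occurrence crossing a position of `Γ`. -/
def IsAttractorZ {A : Type*} (x : ℤ → A) (Γ : Set ℤ) : Prop :=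
  ∀ w : List A, w ≠ [] → IsFactorZ x w →
    ∃ i : ℤ, occursAt x w i ∧ ∃ p ∈ Γ, i ≤ p ∧ p < i + (w.length : ℤ)

/-- The span `sup Γ - inf Γ` of a set of integers (`⊤` when unbounded). -/
noncomputable def setSpan (Γ : Set ℤ) : ℕ∞ :=
  ⨆ a ∈ Γ, ⨆ b ∈ Γ, ((b - a).toNat : ℕ∞)

/-- The string attractor span of a bi-infinite word. -/
noncomputable def wordSpan {A : Type*} (x : ℤ → A) : ℕ∞ :=
  ⨅ Γ ∈ {Γ : Set ℤ | IsAttractorZ x Γ}, setSpan Γ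

/-- The factor complexity of a bi-infinite word. -/
noncomputable def complexityZ {A : Type*} (x : ℤ → A) (n : ℕ) : ℕ :=
  Nat.card {w : List A // w.length = n ∧ IsFactorZ x w}

/-- The shift `S^k`. -/
def shiftZ {A : Type*} (k : ℤ) (x : ℤ → A) : ℤ → A := fun i => x (i + k)

def PositivelyPeriodicZ {A : Type*} (x : ℤ → A) : Prop :=
  ∃ (N : ℤ) (p : ℕ), 1 ≤ p ∧ ∀ n : ℤ, N ≤ n → x n = x (n + (p : ℤ))

def NegativelyPeriodicZ {A : Type*} (x : ℤ → A) : Prop :=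
  ∃ (N : ℤ) (p : ℕ), 1 ≤ p ∧ ∀ n : ℤ, n ≤ N → x n = x (n - (p : ℤ))

def EventuallyPeriodicZ {A : Type*} (x : ℤ → A) : Prop :=
  PositivelyPeriodicZ x ∨ NegativelyPeriodicZ x

def AperiodicZ {A : Type*} (x : ℤ → A) : Prop := ¬ EventuallyPeriodicZ x

def PurelyPeriodicZ {A : Type*} (x : ℤ → A) : Prop :=
  ∃ p : ℕ, 1 ≤ p ∧ ∀ n : ℤ, x n = x (n + (p : ℤ))

def LeftSpecialZ {A : Type*} (x : ℤ → A) (u : List A) : Prop :=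
  ∃ a b : A, a ≠ b ∧ IsFactorZ x (a :: u) ∧ IsFactorZ x (b :: u)

def RightSpecialZ {A : Type*} (x : ℤ → A) (u : List A) : Prop :=
  ∃ a b : A, a ≠ b ∧ IsFactorZ x (u ++ [a]) ∧ IsFactorZ x (u ++ [b])

def BispecialZ {A : Type*} (x : ℤ → A) (u : List A) : Prop :=
  LeftSpecialZ x u ∧ RightSpecialZ x u

/-- A bi-infinite word over `{0,1}` is Sturmian if it is aperiodic with complexity `n + 1`. -/
def SturmianZ (x : ℤ → Fin 2) : Prop :=
  AperiodicZ x ∧ ∀ n : ℕ, complexityZ x n = n + 1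

/-- `x_{[-n, n+1]} = r_n(x) 01 l_n(x)` for all `n`. -/
def UpperCharacteristic (x : ℤ → Fin 2) : Prop :=
  SturmianZ x ∧ ∀ n : ℕ, ∃ r l : List (Fin 2),
    r.length = n ∧ RightSpecialZ x r ∧ l.length = n ∧ LeftSpecialZ x l ∧
    subwordZ x (-(n : ℤ)) (2 * n + 2) = r ++ [0, 1] ++ l

/-- `x_{[-n, n+1]} = r_n(x) 10 l_n(x)` for all `n`. -/
def LowerCharacteristic (x : ℤ → Fin 2) : Prop :=
  SturmianZ x ∧ ∀ n : ℕ, ∃ r l : List (Fin 2),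
    r.length = n ∧ RightSpecialZ x r ∧ l.length = n ∧ LeftSpecialZ x l ∧
    subwordZ x (-(n : ℤ)) (2 * n + 2) = r ++ [1, 0] ++ l

def CharacteristicSturmian (x : ℤ → Fin 2) : Prop :=
  UpperCharacteristic x ∨ LowerCharacteristic x

def QuasiSturmianZ {A : Type*} (x : ℤ → A) : Prop :=
  AperiodicZ x ∧ ∃ (n₀ k : ℕ), 1 ≤ k ∧ ∀ n : ℕ, n₀ ≤ n → complexityZ x n = n + k

/-- Starting position in `φ(x)` of the image `φ(x_i)` (image of `x_0` starts at `0`). -/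
def blockStart {A B : Type*} (φ : A → List B) (x : ℤ → A) (i : ℤ) : ℤ :=
  if 0 ≤ i then ((List.range i.toNat).map fun j => ((φ (x (j : ℤ))).length : ℤ)).sum
  else -((List.range (-i).toNat).map fun j => ((φ (x (-(j : ℤ) - 1))).length : ℤ)).sum

/-- `y` is the image of the bi-infinite word `x` under the substitution `φ`
(with images of letters nonempty). -/
def IsSubstImage {A B : Type*} (φ : A → List B) (x : ℤ → A) (y : ℤ → B) : Prop :=
  (∀ a : A, φ a ≠ []) ∧
  ∀ i : ℤ, subwordZ y (blockStart φ x i) (φ (x i)).length = φ (x i)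

/-- `φ_x(Γ)`: positions of `φ(x)` occupied by images of letters at positions in `Γ`. -/
def substSupp {A B : Type*} (φ : A → List B) (x : ℤ → A) (Γ : Set ℤ) : Set ℤ :=
  {n : ℤ | ∃ i ∈ Γ, blockStart φ x i ≤ n ∧ n < blockStart φ x i + ((φ (x i)).length : ℤ)}

/-- `φ_x^{-1}(Γ)`: positions of letters of `x` whose image blocks in `φ(x)` meet `Γ`. -/
def substPreimage {A B : Type*} (φ : A → List B) (x : ℤ → A) (Γ : Set ℤ) : Set ℤ :=
  {i : ℤ | ∃ n ∈ Γ, blockStart φ x i ≤ n ∧ n < blockStart φ x i + ((φ (x i)).length : ℤ)}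

/-- The set of occurrences of `w` in the finite word `u`. -/
def occSetF {B : Type*} (u w : List B) : Set ℕ :=
  {i : ℕ | i + w.length ≤ u.length ∧ (u.drop i).take w.length = w}

/-- `φ` is a return morphism for `w`. -/
def IsReturnMorphism {A B : Type*} (φ : A → List B) (w : List B) : Prop :=
  w ≠ [] ∧ Function.Injective φ ∧ (∀ a : A, φ a ≠ []) ∧
  ∀ a : A, occSetF (w ++ φ a) w = {0, (φ a).length}

def listPow {A : Type*} (u : List A) : ℕ → List A
  | 0 => []
  | n + 1 => u ++ listPow u n

/-- A substitution on `{0,1}` is acyclic if `φ(0)` and `φ(1)` are not powers of one word. -/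
def AcyclicSubst {A : Type*} (φ : Fin 2 → List A) : Prop :=
  ¬ ∃ (u : List A) (m n : ℕ), φ 0 = listPow u m ∧ φ 1 = listPow u n

/-- The substitution `L₀ : 0 ↦ 0, 1 ↦ 01`. -/
def Lzero : Fin 2 → List (Fin 2) := fun a => if a = 0 then [0] else [0, 1]

/-- The substitution `L₁ : 0 ↦ 10, 1 ↦ 1`. -/
def Lone : Fin 2 → List (Fin 2) := fun a => if a = 0 then [1, 0] else [1]

/-- A finite word has period `r`. -/
def PeriodicF {A : Type*} (w : List A) (r : ℕ) : Prop :=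
  ∀ i : ℕ, i + r < w.length → w[i]? = w[i + r]?

/-- `Γ` is a string attractor of the finite word `w`. -/
def IsAttractorF {A : Type*} (w : List A) (Γ : Set ℕ) : Prop :=
  ∀ u : List A, u ≠ [] → u <:+: w →
    ∃ i : ℕ, i + u.length ≤ w.length ∧ (w.drop i).take u.length = u ∧
      ∃ p ∈ Γ, i ≤ p ∧ p < i + u.length

def RecurrentZ {A : Type*} (x : ℤ → A) : Prop :=
  ∀ w : List A, IsFactorZ x w → {i : ℤ | occursAt x w i}.Infinite

def UniformlyRecurrentZ {A : Type*} (x : ℤ → A) : Prop :=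
  ∀ w : List A, IsFactorZ x w →
    ∃ n : ℕ, ∀ i : ℤ, ∃ j : ℤ, i ≤ j ∧ j + (w.length : ℤ) ≤ i + (n : ℤ) ∧ occursAt x w j

def ModuloRecurrentZ {A : Type*} (x : ℤ → A) : Prop :=
  ∀ w : List A, IsFactorZ x w → ∀ k : ℕ, 1 ≤ k → ∀ r : ℤ,
    ∃ i : ℤ, occursAt x w i ∧ (k : ℤ) ∣ (i - r)

/-- A shift space: closed (product topology, `A` discrete) and shift-invariant. -/
def IsShiftSpace {A : Type*} (X : Set (ℤ → A)) : Prop :=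
  @IsClosed _ (@Pi.topologicalSpace ℤ (fun _ => A) (fun _ => ⊥)) X ∧ shiftZ 1 '' X = X

def IsAttractorX {A : Type*} (X : Set (ℤ → A)) (Γ : Set ℤ) : Prop :=
  ∀ x ∈ X, IsAttractorZ x Γ

def MinimalShift {A : Type*} (X : Set (ℤ → A)) : Prop :=
  IsShiftSpace X ∧ ∀ Y ⊆ X, IsShiftSpace Y → Y = ∅ ∨ Y = X

/-- The orbit closure of a bi-infinite word (product topology, `A` discrete). -/
def orbitClosureZ {A : Type*} (x : ℤ → A) : Set (ℤ → A) :=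
  @closure _ (@Pi.topologicalSpace ℤ (fun _ => A) (fun _ => ⊥)) {y | ∃ k : ℤ, y = shiftZ k x}

/-!
Write `b j` for the position of `x = L₀(y)` where the block `L₀(y_j)` starts. The zeros of `x` are
exactly the block starts, `x (b j + 1) = y j` and `b (j + 1) = b j + 1 + y j`; in particular every
letter `x_{p+1} = 0` opens a new block, which gives `ℓ`. Consequently `y` on `[j, j + N]` can be read
off `x` on the window `[b j + y j, b (j + N) + 1]`, and every occurrence of that window in `x` starts
at `b j' + y j'` for an occurrence `j'` of the same factor of `y`. An occurrence of the window crossing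
`Γ` at `p` thus gives an occurrence `[j', j' + |w| - 1]` of the factor with `j' ≤ q ≤ j' + |w|`, where
`q ∈ [m, m + ℓ]` is the block of `p`; either `q` or `q - 1` is a crossing position. The conditions on
`x` around `n` and `n + k` rule out the configurations that need the position `m - 1`, resp. `m + ℓ`.
-/

open Set

section Words

variable {A : Type*}

-- The definition of `subwordZ` elaborates by coercing `List.range L` to a `List ℤ` first.
lemma subwordZ_eq_map (x : ℤ → A) (i : ℤ) (L : ℕ) :
    subwordZ x i L = (List.range L).map fun s : ℕ => x (i + s) :=
  (congrArg _ (List.flatMap_pure_eq_map _ _)).trans (List.map_map ..)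

lemma subwordZ_length (x : ℤ → A) (i : ℤ) (L : ℕ) : (subwordZ x i L).length = L := by
  simp [subwordZ_eq_map]

lemma subwordZ_succ (x : ℤ → A) (i : ℤ) (L : ℕ) :
    subwordZ x i (L + 1) = subwordZ x i L ++ [x (i + L)] := by
  simp [subwordZ_eq_map, List.range_succ]

lemma subwordZ_eq_subwordZ_iff (x x' : ℤ → A) (i i' : ℤ) (L : ℕ) :
    subwordZ x i L = subwordZ x' i' L ↔ ∀ s : ℕ, s < L → x (i + s) = x' (i' + s) := by
  simp only [subwordZ_eq_map, List.map_inj_left, List.mem_range]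

lemma IsAttractorZ.exists_mem_apply_eq {x : ℤ → A} {Γ : Set ℤ} (hΓ : IsAttractorZ x Γ)
    (i : ℤ) : ∃ p ∈ Γ, x p = x i := by
  obtain ⟨i', hi', p, hp, hi'p, hpi'⟩ :=
    hΓ [x i] (List.cons_ne_nil _ _) ⟨i, by simp [occursAt, subwordZ]⟩
  obtain rfl : i' = p := by
    simp only [List.length_singleton, Nat.cast_one, Order.lt_add_one_iff] at hpi'
    omega
  exact ⟨i', hp, by simpa [occursAt, subwordZ] using hi'⟩

lemma count_one_singleton_fin_two (a : Fin 2) : [a].count 1 = a.val := by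
  fin_cases a <;> rfl

end Words

section Blocks

variable {A B : Type*} {φ : A → List B} (y : ℤ → A)

lemma blockStart_zero : blockStart φ y 0 = 0 := by
  simp [blockStart]

lemma blockStart_succ (j : ℤ) :
    blockStart φ y (j + 1) = blockStart φ y j + (φ (y j)).length := by
  unfold blockStart
  simp only [List.pure_def, List.bind_eq_flatMap, ← List.map_eq_flatMap, List.map_map]
  rcases le_or_gt 0 j with h | h
  · rw [if_pos h, if_pos (by omega), show (j + 1).toNat = j.toNat + 1 by omega, List.range_succ]
    simp [h]
  · have hj : -(((-(j + 1)).toNat : ℕ) : ℤ) - 1 = j := by omega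
    rw [if_neg h.not_ge, show (-j).toNat = (-(j + 1)).toNat + 1 by omega, List.range_succ]
    simp only [List.map_append, List.sum_append, List.map_singleton, List.sum_singleton,
      Function.comp_apply, hj]
    split_ifs with h'
    · obtain rfl : j = -1 := by omega
      simp
    · ring

noncomputable def blockIndex (φ : A → List B) (y : ℤ → A) (p : ℤ) : ℤ :=
  Classical.epsilon fun j => blockStart φ y j ≤ p ∧ p < blockStart φ y (j + 1)

variable {y} (hφ : ∀ a, φ a ≠ [])
include hφ

lemma blockStart_strictMono : StrictMono (blockStart φ y) :=
  strictMono_int_of_lt_succ fun j => by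
    rw [blockStart_succ]
    have := List.length_pos_iff.mpr (hφ (y j))
    omega

lemma sub_le_blockStart_sub {i j : ℤ} (hij : i ≤ j) :
    j - i ≤ blockStart φ y j - blockStart φ y i := by
  induction j, hij using Int.leInduction with
  | base => simp
  | succ j _ ih =>
    have := blockStart_strictMono (y := y) hφ (lt_add_one j)
    omega

lemma exists_blockStart_le_lt (p : ℤ) :
    ∃ j, blockStart φ y j ≤ p ∧ p < blockStart φ y (j + 1) := by
  have h0 := blockStart_zero (φ := φ) y
  obtain ⟨j, hj, hmax⟩ := Int.exists_greatest_of_bdd (P := fun j => blockStart φ y j ≤ p)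
    ⟨max p 0, fun j hj => by
      by_contra! h
      have := sub_le_blockStart_sub (y := y) hφ (show 0 ≤ j by omega)
      omega⟩
    ⟨min p 0, by
      have := sub_le_blockStart_sub (y := y) hφ (show min p 0 ≤ 0 by omega)
      omega⟩
  exact ⟨j, hj, lt_of_not_ge fun h => by have := hmax _ h; omega⟩

lemma blockIndex_spec (p : ℤ) :
    blockStart φ y (blockIndex φ y p) ≤ p ∧ p < blockStart φ y (blockIndex φ y p + 1) :=
  Classical.epsilon_spec (exists_blockStart_le_lt hφ p)

lemma le_blockIndex_iff {j p : ℤ} : j ≤ blockIndex φ y p ↔ blockStart φ y j ≤ p := by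
  refine ⟨fun h => ((blockStart_strictMono hφ).monotone h).trans (blockIndex_spec hφ p).1,
    fun h => ?_⟩
  by_contra! hlt
  have := (blockStart_strictMono (y := y) hφ).monotone (Int.add_one_le_of_lt hlt)
  have := (blockIndex_spec (y := y) hφ p).2
  omega

lemma blockIndex_lt_iff {j p : ℤ} : blockIndex φ y p < j ↔ p < blockStart φ y j := by
  simpa only [not_le] using (le_blockIndex_iff hφ).not

lemma blockIndex_blockStart (j : ℤ) : blockIndex φ y (blockStart φ y j) = j :=
  le_antisymm (Int.lt_add_one_iff.mp ((blockIndex_lt_iff hφ).mpr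
    (blockStart_strictMono hφ (lt_add_one j)))) ((le_blockIndex_iff hφ).mpr le_rfl)

lemma blockIndex_mono : Monotone (blockIndex φ y) :=
  fun _ _ h => (le_blockIndex_iff hφ).mpr ((blockIndex_spec hφ _).1.trans h)

lemma substPreimage_Icc {a c : ℤ} (hac : a ≤ c) :
    substPreimage φ y (Icc a c) = Icc (blockIndex φ y a) (blockIndex φ y c) := by
  ext i
  simp only [substPreimage, mem_ofPred_eq, mem_Icc]
  rw [← Int.lt_add_one_iff, blockIndex_lt_iff hφ, le_blockIndex_iff hφ, blockStart_succ]
  constructor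
  · rintro ⟨p, ⟨hap, hpc⟩, hip, hpi⟩
    omega
  · rintro ⟨hai, hic⟩
    have := List.length_pos_iff.mpr (hφ (y i))
    rcases le_total a (blockStart φ y i) with h | h
    · exact ⟨blockStart φ y i, ⟨h, hic⟩, le_rfl, by omega⟩
    · exact ⟨a, ⟨le_rfl, by omega⟩, h, by omega⟩

end Blocks

namespace Lzero

lemma length_apply (a : Fin 2) : ((Lzero a).length : ℤ) = 1 + a.val := by
  fin_cases a <;> rfl

lemma blockStart_succ (y : ℤ → Fin 2) (j : ℤ) :
    blockStart Lzero y (j + 1) = blockStart Lzero y j + 1 + (y j).val := by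
  rw [_root_.blockStart_succ, length_apply, add_assoc]

variable {y x : ℤ → Fin 2} (hx : IsSubstImage Lzero y x)
include hx

lemma apply_blockStart_add (j : ℤ) {s : ℕ} (hs : s < (Lzero (y j)).length) :
    x (blockStart Lzero y j + s) = (Lzero (y j))[s] := by
  have := List.getElem_of_eq (hx.2 j) (by rwa [subwordZ_length])
  simpa [subwordZ_eq_map] using this

lemma apply_blockStart (j : ℤ) : x (blockStart Lzero y j) = 0 := by
  have := apply_blockStart_add hx j (s := 0) (List.length_pos_iff.mpr (hx.1 _))
  obtain h | h : y j = 0 ∨ y j = 1 := by omega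
  all_goals simpa [h, Lzero] using this

lemma apply_blockStart_add_one (j : ℤ) : x (blockStart Lzero y j + 1) = y j := by
  obtain h | h : y j = 0 ∨ y j = 1 := by omega
  · have := blockStart_succ y j
    simp only [h, Fin.val_zero, Nat.cast_zero, add_zero] at this
    rw [← this, h, apply_blockStart hx]
  · have := apply_blockStart_add hx j (s := 1) (by simp [h, Lzero])
    simpa [h, Lzero] using this

lemma apply_blockStart_add_val (j : ℤ) : x (blockStart Lzero y j + (y j).val) = y j := by
  obtain h | h : y j = 0 ∨ y j = 1 := by omega
  · simpa [h] using apply_blockStart hx j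
  · simpa [h] using apply_blockStart_add_one hx j

lemma blockStart_blockIndex_add_val (p : ℤ) :
    blockStart Lzero y (blockIndex Lzero y p) + (x p).val = p := by
  obtain ⟨hle, hlt⟩ := blockIndex_spec (y := y) hx.1 p
  generalize blockIndex Lzero y p = q at *
  rw [blockStart_succ] at hlt
  have := (y q).isLt
  obtain rfl | rfl : p = blockStart Lzero y q ∨ p = blockStart Lzero y q + 1 := by omega
  · simp [apply_blockStart hx]
  · rw [apply_blockStart_add_one hx]
    omega

lemma blockIndex_add_one (p : ℤ) :
    blockIndex Lzero y (p + 1) = blockIndex Lzero y p + 1 - (x (p + 1)).val := by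
  have hoff := blockStart_blockIndex_add_val hx (p + 1)
  generalize blockIndex Lzero y (p + 1) = q at hoff ⊢
  obtain h | h : x (p + 1) = 0 ∨ x (p + 1) = 1 := by omega
  · simp only [h, Fin.val_zero, Nat.cast_zero, add_zero, sub_zero] at hoff ⊢
    have := blockStart_strictMono (y := y) hx.1 (sub_one_lt q)
    have : blockIndex Lzero y p = q - 1 :=
      le_antisymm (Int.le_sub_one_of_lt ((blockIndex_lt_iff hx.1).mpr (by omega)))
        ((le_blockIndex_iff hx.1).mpr (by omega))
    omega
  · rw [h, Fin.val_one, Nat.cast_one, add_left_inj] at hoff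
    rw [h, Fin.val_one, Nat.cast_one, add_sub_cancel_right, ← hoff, blockIndex_blockStart hx.1]

lemma blockIndex_add_eq_sub_count (n : ℤ) (k : ℕ) :
    blockIndex Lzero y (n + k) = blockIndex Lzero y n + k - (subwordZ x (n + 1) k).count 1 := by
  induction k with
  | zero => simp [subwordZ_eq_map]
  | succ k ih =>
    rw [subwordZ_succ, List.count_append, count_one_singleton_fin_two, Nat.cast_succ, ← add_assoc,
      blockIndex_add_one hx, ih, show n + 1 + k = n + k + 1 by ring]
    push_cast
    ring

lemma blockStart_sub_eq_and_apply_eq_of_agree {j j' : ℤ} {N : ℕ}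
    (hagree : ∀ t : ℤ, 1 ≤ t → t ≤ blockStart Lzero y (j + N) - blockStart Lzero y j + 1 →
      x (blockStart Lzero y j + t) = x (blockStart Lzero y j' + t))
    {s : ℕ} (hs : s ≤ N) :
    blockStart Lzero y (j' + s) - blockStart Lzero y j' =
        blockStart Lzero y (j + s) - blockStart Lzero y j ∧ y (j' + s) = y (j + s) := by
  have hmono := (blockStart_strictMono (y := y) hx.1).monotone
  induction s with
  | zero =>
    have := hmono (show j ≤ j + N by omega)
    simpa [← apply_blockStart_add_one hx] using (hagree 1 le_rfl (by omega)).symm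
  | succ s ih =>
    obtain ⟨hd, hy⟩ := ih (by omega)
    have hd' : blockStart Lzero y (j' + (s + 1 : ℕ)) - blockStart Lzero y j' =
        blockStart Lzero y (j + (s + 1 : ℕ)) - blockStart Lzero y j := by
      push_cast
      rw [← add_assoc, ← add_assoc, blockStart_succ, blockStart_succ, hy]
      omega
    refine ⟨hd', ?_⟩
    have := hmono (show j + (s + 1 : ℕ) ≤ j + N by omega)
    have := hmono (show j ≤ j + (s + 1 : ℕ) by omega)
    have := hagree (blockStart Lzero y (j + (s + 1 : ℕ)) - blockStart Lzero y j + 1)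
      (by omega) (by omega)
    rw [← apply_blockStart_add_one hx, ← apply_blockStart_add_one hx]
    convert this.symm using 2 <;> omega

lemma exists_occursAt_crossing {Γ : Set ℤ} (hΓ : IsAttractorZ x Γ) {w : List (Fin 2)}
    (hw : w ≠ []) {j : ℤ} (hj : occursAt y w j) :
    ∃ j', occursAt y w j' ∧ ∃ p ∈ Γ, blockStart Lzero y j' + (y j').val ≤ p ∧
      p ≤ blockStart Lzero y (j' + w.length - 1) + 1 := by
  obtain ⟨N, hN⟩ : ∃ N : ℕ, w.length = N + 1 :=
    Nat.exists_eq_add_one.mpr (List.length_pos_iff.mpr hw)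
  have hmono := (blockStart_strictMono (y := y) hx.1).monotone (show j ≤ j + N by omega)
  have hyj := (y j).isLt
  set start := blockStart Lzero y j + (y j).val
  set len := (blockStart Lzero y (j + N) + 2 - start).toNat
  have hv : subwordZ x start len ≠ [] := by
    rw [← List.length_pos_iff, subwordZ_length]
    omega
  obtain ⟨i', hi', p, hp, hi'p, hpi'⟩ :=
    hΓ _ hv ⟨start, by rw [occursAt, subwordZ_length]⟩
  rw [occursAt, subwordZ_length, subwordZ_eq_subwordZ_iff] at hi'
  set j' := blockIndex Lzero y i'
  have hj'i' : blockStart Lzero y j' + (y j).val = i' := by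
    have hstart : x start = y j := apply_blockStart_add_val hx j
    have h0 := hi' 0 (by omega)
    simp only [Nat.cast_zero, add_zero] at h0
    simpa [h0, hstart] using blockStart_blockIndex_add_val hx i'
  have hagree : ∀ t : ℤ, 1 ≤ t → t ≤ blockStart Lzero y (j + N) - blockStart Lzero y j + 1 →
      x (blockStart Lzero y j + t) = x (blockStart Lzero y j' + t) := by
    intro t ht1 ht2
    have := hi' (t - (y j).val).toNat (by omega)
    convert this.symm using 2 <;> omega
  have hrec := fun s (hs : s ≤ N) => blockStart_sub_eq_and_apply_eq_of_agree hx hagree hs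
  refine ⟨j', ((subwordZ_eq_subwordZ_iff ..).mpr fun s hs => (hrec s (by omega)).2).trans hj,
    p, hp, ?_, ?_⟩
  · have := (hrec 0 (Nat.zero_le N)).2
    simp only [Nat.cast_zero, add_zero] at this
    omega
  · have := (hrec N le_rfl).1
    rw [hN, show j' + ((N + 1 : ℕ) : ℤ) - 1 = j' + N by push_cast; ring]
    rw [subwordZ_length] at hpi'
    omega

lemma blockStart_blockIndex_of_apply_eq_zero {p : ℤ} (h : x p = 0) :
    blockStart Lzero y (blockIndex Lzero y p) = p := by
  simpa [h] using blockStart_blockIndex_add_val hx p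

lemma apply_blockIndex_of_apply_eq_zero {p : ℤ} (h : x p = 0) :
    y (blockIndex Lzero y p) = x (p + 1) := by
  rw [← apply_blockStart_add_one hx, blockStart_blockIndex_of_apply_eq_zero hx h]

lemma eq_blockStart_succ_of_lt_blockIndex {i p : ℤ} (hp : p ≤ blockStart Lzero y i + 1)
    (hi : i < blockIndex Lzero y p) : p = blockStart Lzero y (i + 1) ∧ x (p - 1) = 0 := by
  have := (le_blockIndex_iff hx.1).mp hi
  have := blockStart_succ y i
  refine ⟨by omega, ?_⟩
  rw [show p - 1 = blockStart Lzero y i by omega, apply_blockStart hx]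

lemma blockIndex_lt_of_apply_eq_zero_of_apply_succ_eq_one {n : ℤ} {k : ℕ}
    (hΓ : IsAttractorZ x (Icc n (n + k))) (h0 : x (n + k) = 0) (h1 : x (n + k + 1) = 1) :
    blockIndex Lzero y n < blockIndex Lzero y (n + k) := by
  obtain ⟨p, ⟨hnp, hpk⟩, hp⟩ := hΓ.exists_mem_apply_eq (n + k + 1)
  have hpk' : p < n + k := lt_of_le_of_ne hpk fun h => by simp [h, h0, h1] at hp
  refine (blockIndex_mono hx.1 hnp).trans_lt ((blockIndex_lt_iff hx.1).mpr ?_)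
  rwa [blockStart_blockIndex_of_apply_eq_zero hx h0]

lemma isAttractorZ_Icc_blockIndex {n : ℤ} {k : ℕ} (hΓ : IsAttractorZ x (Icc n (n + k)))
    {lo hi : ℤ}
    (hlo : lo = blockIndex Lzero y n - 1 ∨
      lo = blockIndex Lzero y n ∧ ¬(x (n - 1) = 0 ∧ x n = 0))
    (hhi : hi = blockIndex Lzero y (n + k) ∨
      hi = blockIndex Lzero y (n + k) - 1 ∧ x (n + k) = 0 ∧ x (n + k + 1) = 1) :
    IsAttractorZ y (Icc lo hi) := by
  set m := blockIndex Lzero y n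
  set M := blockIndex Lzero y (n + k)
  have hbm : blockStart Lzero y m ≤ n := (blockIndex_spec hx.1 n).1
  rintro w hw ⟨j, hj⟩
  obtain ⟨j', hj', p, ⟨hnp, hpk⟩, hp1, hp2⟩ := exists_occursAt_crossing hx hΓ hw hj
  have hL := List.length_pos_iff.mpr hw
  set q := blockIndex Lzero y p
  have hmq : m ≤ q := blockIndex_mono hx.1 hnp
  have hqM : q ≤ M := blockIndex_mono hx.1 hpk
  have hj'q : j' ≤ q := (le_blockIndex_iff hx.1).mpr (by omega)
  have hqL : q ≤ j' + w.length := by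
    by_contra! h
    have := blockIndex_blockStart (y := y) hx.1 (j' + w.length - 1 + 1)
    rw [← (eq_blockStart_succ_of_lt_blockIndex hx hp2 (by omega)).1] at this
    omega
  by_cases hq : q ≤ j' + w.length - 1 ∧ q ≤ hi
  · exact ⟨j', hj', q, ⟨by omega, hq.2⟩, hj'q, by omega⟩
  refine ⟨j', hj', q - 1, ⟨?_, by omega⟩, ?_, by omega⟩
  · obtain rfl | ⟨rfl, hn⟩ := hlo
    · omega
    by_contra hqm
    rcases not_and_or.mp hq with hq | hq
    · obtain ⟨hp, hp'⟩ := eq_blockStart_succ_of_lt_blockIndex hx hp2 (by omega)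
      rw [show j' + w.length - 1 + 1 = m by omega] at hp
      obtain rfl : p = n := by omega
      exact hn ⟨hp', hp ▸ apply_blockStart hx m⟩
    · obtain ⟨-, h0, h1⟩ := hhi.resolve_left (by omega)
      have := blockIndex_lt_of_apply_eq_zero_of_apply_succ_eq_one hx hΓ h0 h1
      omega
  · by_contra hqj
    obtain ⟨-, h0, h1⟩ := hhi.resolve_left (by omega)
    have hyM := apply_blockIndex_of_apply_eq_zero hx h0
    rw [show j' = M by omega, hyM, h1, blockStart_blockIndex_of_apply_eq_zero hx h0,
      Fin.val_one, Nat.cast_one] at hp1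
    omega

end Lzero

/-- Pre-image of an interval string attractor under `L₀`. -/
theorem preimage_attractor_Lzero (y x : ℤ → Fin 2) (hx : IsSubstImage Lzero y x)
    (n : ℤ) (k : ℕ) (hΓ : IsAttractorZ x (Set.Icc n (n + (k : ℤ)))) :
    ∃ m ℓ : ℤ,
      ℓ = (k : ℤ) - ((subwordZ x (n + 1) k).count 1 : ℤ) ∧
      substPreimage Lzero y (Set.Icc n (n + (k : ℤ))) = Set.Icc m (m + ℓ) ∧
      IsAttractorZ y (Set.Icc (m - 1) (m + ℓ)) ∧
      (¬(x (n - 1) = 0 ∧ x n = 0) → IsAttractorZ y (Set.Icc m (m + ℓ))) ∧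
      ((x (n + (k : ℤ)) = 0 ∧ x (n + (k : ℤ) + 1) = 1) →
        IsAttractorZ y (Set.Icc (m - 1) (m + ℓ - 1))) ∧
      (¬(x (n - 1) = 0 ∧ x n = 0) ∧ (x (n + (k : ℤ)) = 0 ∧ x (n + (k : ℤ) + 1) = 1) →
        IsAttractorZ y (Set.Icc m (m + ℓ - 1))) := by
  have hend : blockIndex Lzero y n + ((k : ℤ) - ((subwordZ x (n + 1) k).count 1 : ℤ)) =
      blockIndex Lzero y (n + k) := by
    rw [Lzero.blockIndex_add_eq_sub_count hx]
    ring
  refine ⟨blockIndex Lzero y n, _, rfl, ?_, ?_, ?_, ?_, ?_⟩ <;> rw [hend]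
  · exact substPreimage_Icc hx.1 (by omega)
  · exact Lzero.isAttractorZ_Icc_blockIndex hx hΓ (.inl rfl) (.inl rfl)
  · exact fun h => Lzero.isAttractorZ_Icc_blockIndex hx hΓ (.inr ⟨rfl, h⟩) (.inl rfl)
  · exact fun h => Lzero.isAttractorZ_Icc_blockIndex hx hΓ (.inl rfl) (.inr ⟨rfl, h⟩)
  · exact fun ⟨h, h'⟩ => Lzero.isAttractorZ_Icc_blockIndex hx hΓ (.inr ⟨rfl, h⟩) (.inr ⟨rfl, h'⟩)
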